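/- Let α ≥ 1 and let λ ⊢ n be a partition with first row λ_1 = n−k (1 ≤ k ≤ n−1). Then eig_α(T_λ^↓) ≤ eig_α(T^↘_{(n−k,⋆)}). -/

import Mathlib

/-- `N_α(n) = Σ_{i=1}^n i^α`. -/
noncomputable def NA (α : ℝ) (n : ℕ) : ℝ := ∑ i ∈ Finset.range n, ((i : ℝ) + 1) ^ α

/-- The biased eigenvalue of a filling `T` of the diagram `μ` (with `n = μ.card`):
`eig_α(T) = (1/N_α(n))·Σ_{(i,j)∈λ} (j−i+1)·T(i,j)^{α−1}`.  Cells are `0`-indexed,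
which leaves `j−i+1` unchanged. -/
noncomputable def eigA (α : ℝ) (μ : YoungDiagram) (T : ℕ × ℕ → ℕ) : ℝ :=
  (1 / NA α μ.card) *
    ∑ c ∈ μ.cells, (((c.2 : ℝ) - (c.1 : ℝ) + 1) * ((T c : ℝ) ^ (α - 1)))

/-- The row-filled tableau `T_λ^→` : rows are numbered `1,…,n` left to right, top row first. -/
def rowFill (μ : YoungDiagram) (c : ℕ × ℕ) : ℕ :=
  (∑ i ∈ Finset.range c.1, μ.rowLen i) + c.2 + 1

/-- The column-filled tableau `T_λ^↓` : columns are numbered `1,…,n` top to bottom,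
leftmost column first. -/
def colFill (μ : YoungDiagram) (c : ℕ × ℕ) : ℕ :=
  (∑ j ∈ Finset.range c.2, μ.colLen j) + c.1 + 1

/-- The partition `(n−k,⋆)` of `n`: as many rows of length `n−k` as possible, the last row
holding the remainder.  Its cells are exactly the (0-indexed) `(i,j)` with `j < n−k` and
`i·(n−k) + j < n`; 1-indexed, rows `1,…,l−1` have length `n−k` and row `l = ⌈n/(n−k)⌉`
has length `n − (l−1)(n−k)`. -/
def nkStar (n k : ℕ) : YoungDiagram where
  cells := (Finset.range n ×ˢ Finset.range n).filter
    (fun c => c.1 * (n - k) + c.2 < n ∧ c.2 < n - k)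
  isLowerSet := by
    intro a b hab ha
    simp only [Finset.coe_filter, Set.mem_setOf_eq, Finset.mem_product, Finset.mem_range]
      at ha ⊢
    have h1 : b.1 ≤ a.1 := hab.1
    have h2 : b.2 ≤ a.2 := hab.2
    have hmul : b.1 * (n - k) ≤ a.1 * (n - k) := Nat.mul_le_mul_right _ h1
    obtain ⟨⟨ha1, ha2⟩, ha3, ha4⟩ := ha
    exact ⟨⟨lt_of_le_of_lt h1 ha1, lt_of_le_of_lt h2 ha2⟩, by omega, by omega⟩

/-- The diagonal tableau `T^↘_μ` : `μ` is filled with `1,…,n` diagonal by diagonal from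
left to right, each diagonal from top to bottom; explicitly
`T(i,j) = #{(i′,j′) ∈ μ : j′−i′ < j−i} + #{(i′,j′) ∈ μ : j′−i′ = j−i and i′ ≤ i}`. -/
def diagFill (μ : YoungDiagram) (c : ℕ × ℕ) : ℕ :=
  (μ.cells.filter (fun d => (d.2 : ℤ) - (d.1 : ℤ) < (c.2 : ℤ) - (c.1 : ℤ))).card +
  (μ.cells.filter (fun d => (d.2 : ℤ) - (d.1 : ℤ) = (c.2 : ℤ) - (c.1 : ℤ) ∧ d.1 ≤ c.1)).card

section EigAux
open Finset

lemma sum_min_eq (w : ℕ) (hw : 1 ≤ w) :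
    ∀ (N n : ℕ), n ≤ N * w → ∑ a ∈ range N, min w (n - a * w) = n := by
  intro N
  induction N with
  | zero => intro n hn; simpa using by omega
  | succ N ih =>
    intro n hn
    rw [Finset.sum_range_succ' (fun a => min w (n - a * w))]
    have h0 : ∀ a : ℕ, n - (a + 1) * w = (n - w) - a * w := by intro a; ring_nf; omega
    simp only [h0]
    rcases le_or_gt n w with h | h
    · have : ∀ a : ℕ, min w ((n - w) - a * w) = 0 := by
        intro a; have : n - w = 0 := by omega
        simp [this]
      simp [this]; omega
    · rw [ih (n - w) (by nlinarith [Nat.sub_add_cancel (le_of_lt h)] <;> omega)]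
      simp; omega

lemma sum_two_point {f g : ℕ → ℕ} {N u v : ℕ} (hu : u < N) (hv : v < N) (huv : u ≠ v)
    (h : ∀ a, a ≠ u → a ≠ v → f a = g a) :
    ∑ a ∈ range N, f a + (g u + g v) = ∑ a ∈ range N, g a + (f u + f v) := by
  have hu' : u ∈ range N := mem_range.2 hu
  have hv' : v ∈ (range N).erase u := by
    rw [mem_erase]; exact ⟨Ne.symm huv, mem_range.2 hv⟩
  have hf : ∑ a ∈ range N, f a = f u + (f v + ∑ a ∈ ((range N).erase u).erase v, f a) := by
    rw [Finset.add_sum_erase _ f hv', Finset.add_sum_erase _ f hu']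
  have hg : ∑ a ∈ range N, g a = g u + (g v + ∑ a ∈ ((range N).erase u).erase v, g a) := by
    rw [Finset.add_sum_erase _ g hv', Finset.add_sum_erase _ g hu']
  have he : ∑ a ∈ ((range N).erase u).erase v, f a
      = ∑ a ∈ ((range N).erase u).erase v, g a := by
    apply Finset.sum_congr rfl
    intro a ha
    rw [mem_erase, mem_erase] at ha
    exact h a ha.2.1 ha.1
  omega

lemma lemA (w : ℕ) (d : ℤ) : ∀ (M N n : ℕ) (x : ℕ → ℕ),
    (∑ a ∈ range N, a * x a ≤ M) →
    (∀ a b : ℕ, a ≤ b → x b ≤ x a) →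
    (∀ a, x a ≤ w) → (∀ a, N ≤ a → x a = 0) →
    (∑ a ∈ range N, x a = n) →
    ∑ a ∈ range N, (x a - ((a : ℤ) + d).toNat) ≤
      ∑ a ∈ range N, (min w (n - a * w) - ((a : ℤ) + d).toNat) := by
  intro M
  induction M using Nat.strong_induction_on with
  | _ M IH =>
    intro N n x hM hanti hxw hout hsum
    by_cases hg : ∀ u v, u < v → v < N → 0 < x v → x u = w
    · -- greedy case: x a = min w (n - a*w) for a < N
      have hhead : ∀ a, a ≤ N → ∑ b ∈ range a, x b = min (a * w) n := by
        intro a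
        induction a with
        | zero => simp
        | succ a iha =>
          intro ha
          have hS := iha (by omega)
          have hpart : ∑ b ∈ range (a+1), x b ≤ n := by
            rw [← hsum]
            exact Finset.sum_le_sum_of_subset (Finset.range_subset_range.2 ha)
          rw [Finset.sum_range_succ, hS] at hpart ⊢
          have hrw : (a+1) * w = a * w + w := by ring
          rcases Nat.lt_or_ge (x a) w with hlt | hge
          · -- all later rows are 0
            have hzero : ∀ b, a < b → b < N → x b = 0 := by
              intro b hab hbN
              by_contra hb
              have := hg a b hab hbN (by omega)
              omega
            have htot : ∑ b ∈ range N, x b = ∑ b ∈ range (a+1), x b := by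
              rcases le_or_gt N (a+1) with h | h
              · have : N = a + 1 := by omega
                rw [this]
              · rw [← Finset.sum_range_add_sum_Ico x (le_of_lt h)]
                have : ∑ b ∈ Finset.Ico (a+1) N, x b = 0 := by
                  apply Finset.sum_eq_zero
                  intro b hb
                  rw [Finset.mem_Ico] at hb
                  exact hzero b (by omega) hb.2
                omega
            rw [hsum, Finset.sum_range_succ, hS] at htot
            omega
          · have hxa : x a = w := le_antisymm (hxw a) hge
            rw [hxa]
            omega
      have heq : ∀ a ∈ range N, x a - ((a : ℤ) + d).toNat
          = min w (n - a * w) - ((a : ℤ) + d).toNat := by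
        intro a ha
        rw [mem_range] at ha
        have h1 := hhead a (by omega)
        have h2 := hhead (a+1) (by omega)
        rw [Finset.sum_range_succ, h1] at h2
        have hrw : (a+1) * w = a * w + w := by ring
        have : x a = min w (n - a * w) := by omega
        rw [this]
      exact le_of_eq (Finset.sum_congr rfl heq)
    · push_neg at hg
      obtain ⟨u, v, huv, hvN, hxv, hxu⟩ := hg
      have hxuw : x u < w := lt_of_le_of_ne (hxw u) hxu
      have hexu : ∃ a, x a < w := ⟨u, hxuw⟩
      set u0 := Nat.find hexu with hu0def
      have hu0 : x u0 < w := Nat.find_spec hexu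
      have hu0min : ∀ a, a < u0 → x a = w := by
        intro a ha
        have := Nat.find_min hexu ha
        have := hxw a
        omega
      have hu0le : u0 ≤ u := Nat.find_min' hexu hxuw
      have hvN1 : v ≤ N - 1 := by omega
      set v0 := Nat.findGreatest (fun a => 0 < x a) (N - 1) with hv0def
      have hv0 : 0 < x v0 := Nat.findGreatest_spec (P := fun a => 0 < x a) hvN1 hxv
      have hv0le : v0 ≤ N - 1 := Nat.findGreatest_le _
      have hv0max : ∀ a, v0 < a → x a = 0 := by
        intro a ha
        rcases le_or_gt N a with h | h
        · exact hout a h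
        · have := Nat.findGreatest_is_greatest (P := fun a => 0 < x a) (n := N - 1)
            ha (by omega)
          omega
      have hu0v0 : u0 < v0 := by
        by_contra hc
        have h1 : v ≤ v0 := by
          by_contra hcc
          have := hv0max v (by omega)
          omega
        omega
      have hv0N : v0 < N := by omega
      have hu0N : u0 < N := by omega
      -- the moved sequence
      set x' : ℕ → ℕ := fun a => if a = u0 then x u0 + 1 else if a = v0 then x v0 - 1 else x a
        with hx'def
      have hx'u0 : x' u0 = x u0 + 1 := by simp [hx'def]
      have hx'v0 : x' v0 = x v0 - 1 := by
        have hne : v0 ≠ u0 := by omega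
        simp [hx'def, hne]
      have hx'other : ∀ a, a ≠ u0 → a ≠ v0 → x' a = x a := by
        intro a h1 h2; simp [hx'def, h1, h2]
      have hanti' : ∀ a b : ℕ, a ≤ b → x' b ≤ x' a := by
        intro a b hab
        rcases eq_or_ne b u0 with rfl | hbu
        · rcases eq_or_ne a u0 with rfl | hau
          · omega
          · have ha' : a < u0 := by omega
            rw [hx'u0, hx'other a hau (by omega), hu0min a ha']
            omega
        · rcases eq_or_ne b v0 with rfl | hbv
          · rcases eq_or_ne a u0 with rfl | hau
            · rw [hx'u0, hx'v0]
              have := hanti u0 v0 (le_of_lt hu0v0)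
              omega
            · rcases eq_or_ne a v0 with rfl | hav
              · omega
              · rw [hx'v0, hx'other a hau hav]
                have := hanti a v0 hab
                omega
          · rw [hx'other b hbu hbv]
            rcases eq_or_ne a u0 with rfl | hau
            · rw [hx'u0]
              have := hanti u0 b hab
              omega
            · rcases eq_or_ne a v0 with rfl | hav
              · rw [hx'v0]
                have : x b = 0 := hv0max b (by omega)
                omega
              · rw [hx'other a hau hav]
                exact hanti a b hab
      have hxw' : ∀ a, x' a ≤ w := by
        intro a
        rcases eq_or_ne a u0 with rfl | hau
        · omega
        · rcases eq_or_ne a v0 with rfl | hav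
          · rw [hx'v0]; have := hxw v0; omega
          · rw [hx'other a hau hav]; exact hxw a
      have hout' : ∀ a, N ≤ a → x' a = 0 := by
        intro a ha
        rw [hx'other a (by omega) (by omega)]
        exact hout a ha
      have hsum' : ∑ a ∈ range N, x' a = n := by
        have := sum_two_point (f := x') (g := x) hu0N hv0N (by omega) hx'other
        rw [hsum, hx'u0, hx'v0] at this
        omega
      have hmeas : ∑ a ∈ range N, a * x' a + v0 = ∑ a ∈ range N, a * x a + u0 := by
        have := sum_two_point (f := fun a => a * x' a) (g := fun a => a * x a) hu0N hv0N
          (by omega) (by intro a h1 h2; show _ * _ = _ * _; rw [hx'other a h1 h2])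
        simp only [hx'u0, hx'v0] at this
        obtain ⟨q, hq⟩ : ∃ q, x v0 = q + 1 := ⟨x v0 - 1, by omega⟩
        rw [hq] at this
        have e1 : u0 * (x u0 + 1) = u0 * x u0 + u0 := by ring
        have e2 : v0 * (q + 1 - 1) = v0 * q := by norm_num
        have e3 : v0 * (q + 1) = v0 * q + v0 := by ring
        rw [e1, e2, e3] at this
        omega
      have hmeas' : ∑ a ∈ range N, a * x' a < M := by
        have h1 : ∑ a ∈ range N, a * x a ≤ M := hM
        omega
      have hstep : ∑ a ∈ range N, (x a - ((a : ℤ) + d).toNat) ≤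
          ∑ a ∈ range N, (x' a - ((a : ℤ) + d).toNat) := by
        have h2p := sum_two_point (f := fun a => x a - ((a : ℤ) + d).toNat)
          (g := fun a => x' a - ((a : ℤ) + d).toNat) hu0N hv0N (by omega)
          (by intro a h1 h2; show _ - _ = _ - _; rw [hx'other a h1 h2])
        have htmono : ((u0 : ℤ) + d).toNat ≤ ((v0 : ℤ) + d).toNat := by
          have : (u0 : ℤ) + d ≤ (v0 : ℤ) + d := by
            have : (u0 : ℤ) ≤ (v0 : ℤ) := by exact_mod_cast le_of_lt hu0v0
            omega
          omega
        have hxuv : x v0 ≤ x u0 := hanti u0 v0 (le_of_lt hu0v0)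
        simp only [hx'u0, hx'v0] at h2p ⊢
        omega
      calc ∑ a ∈ range N, (x a - ((a : ℤ) + d).toNat)
          ≤ ∑ a ∈ range N, (x' a - ((a : ℤ) + d).toNat) := hstep
        _ ≤ _ := IH _ hmeas' N n x' (le_refl _) hanti' hxw' hout' hsum'
lemma cell_fst_lt_card (μ : YoungDiagram) {c : ℕ × ℕ} (hc : c ∈ μ.cells) : c.1 < μ.card := by
  have hsub : (Finset.range (c.1 + 1)).image (fun i => (i, (0 : ℕ))) ⊆ μ.cells := by
    intro x hx
    rw [Finset.mem_image] at hx
    obtain ⟨i, hi, rfl⟩ := hx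
    rw [Finset.mem_range] at hi
    rw [YoungDiagram.mem_cells]
    exact μ.up_left_mem (by omega) (Nat.zero_le _) (μ.mem_cells c |>.mp hc)
  have hcard := Finset.card_le_card hsub
  rw [Finset.card_image_of_injective _ (fun i j h => by simpa using h),
    Finset.card_range] at hcard
  change c.1 < μ.cells.card
  omega

lemma cell_snd_lt_card (μ : YoungDiagram) {c : ℕ × ℕ} (hc : c ∈ μ.cells) : c.2 < μ.card := by
  have hsub : (Finset.range (c.2 + 1)).image (fun j => ((0 : ℕ), j)) ⊆ μ.cells := by
    intro x hx
    rw [Finset.mem_image] at hx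
    obtain ⟨j, hj, rfl⟩ := hx
    rw [Finset.mem_range] at hj
    rw [YoungDiagram.mem_cells]
    exact μ.up_left_mem (Nat.zero_le _) (by omega) (μ.mem_cells c |>.mp hc)
  have hcard := Finset.card_le_card hsub
  rw [Finset.card_image_of_injective _ (fun i j h => by simpa using h),
    Finset.card_range] at hcard
  change c.2 < μ.cells.card
  omega

lemma cnt_eq_sum (μ : YoungDiagram) (R : ℕ) (hR : ∀ c ∈ μ.cells, c.1 < R) (d : ℤ) :
    (μ.cells.filter (fun c => d ≤ (c.2 : ℤ) - c.1)).card
      = ∑ a ∈ range R, (μ.rowLen a - ((a : ℤ) + d).toNat) := by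
  rw [Finset.card_eq_sum_card_fiberwise (f := fun c => c.1) (t := range R)
    (fun c hc => mem_range.2 (hR c (Finset.filter_subset _ _ hc)))]
  apply Finset.sum_congr rfl
  intro a _
  have himg : (μ.cells.filter (fun c => d ≤ (c.2 : ℤ) - c.1)).filter (fun c => c.1 = a)
      = (Finset.Ico (((a : ℤ) + d).toNat) (μ.rowLen a)).image (fun b => (a, b)) := by
    ext ⟨i, j⟩
    simp only [Finset.mem_filter, Finset.mem_image, Finset.mem_Ico, YoungDiagram.mem_cells]
    constructor
    · rintro ⟨⟨hmem, hd⟩, rfl⟩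
      refine ⟨j, ⟨by omega, ?_⟩, rfl⟩
      rwa [← YoungDiagram.mem_iff_lt_rowLen]
    · rintro ⟨b, ⟨hb1, hb2⟩, heq⟩
      obtain ⟨rfl, rfl⟩ := Prod.mk.injEq _ _ _ _ |>.mp heq
      refine ⟨⟨?_, by omega⟩, rfl⟩
      rwa [YoungDiagram.mem_iff_lt_rowLen]
  rw [himg, Finset.card_image_of_injective _ (fun i j h => by simpa using h), Nat.card_Ico]

lemma card_eq_sum_rowLen (μ : YoungDiagram) (R : ℕ) (hR : ∀ c ∈ μ.cells, c.1 < R) :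
    μ.card = ∑ a ∈ range R, μ.rowLen a := by
  have h := cnt_eq_sum μ R hR (-(R : ℤ))
  rw [Finset.filter_true_of_mem (fun c hc => by have := hR c hc; omega)] at h
  rw [YoungDiagram.card, h]
  apply Finset.sum_congr rfl
  intro a ha
  rw [mem_range] at ha
  have : ((a : ℤ) + -(R : ℤ)).toNat = 0 := by omega
  rw [this, Nat.sub_zero]

lemma mem_nkStar {n k : ℕ} {c : ℕ × ℕ} :
    c ∈ nkStar n k ↔ (c.1 < n ∧ c.2 < n) ∧ (c.1 * (n - k) + c.2 < n ∧ c.2 < n - k) := by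
  show c ∈ (nkStar n k).cells ↔ _
  simp [nkStar, Finset.mem_filter, Finset.mem_product, Finset.mem_range, and_assoc]

lemma rowLen_nkStar {n k : ℕ} (hw : 1 ≤ n - k) (a : ℕ) :
    (nkStar n k).rowLen a = min (n - k) (n - a * (n - k)) := by
  have hwn : n - k ≤ n := Nat.sub_le _ _
  have haw : a ≤ a * (n - k) := Nat.le_mul_of_pos_right a (by omega)
  have hiff : ∀ j, (a, j) ∈ nkStar n k ↔ j < min (n - k) (n - a * (n - k)) := by
    intro j
    rw [mem_nkStar]
    dsimp only
    omega
  have h1 := hiff ((nkStar n k).rowLen a)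
  have h2 := hiff (min (n - k) (n - a * (n - k)))
  rw [YoungDiagram.mem_iff_lt_rowLen] at h1 h2
  omega

lemma card_nkStar {n k : ℕ} (hw : 1 ≤ n - k) : (nkStar n k).card = n := by
  have hR : ∀ c ∈ (nkStar n k).cells, c.1 < n := by
    intro c hc
    rw [YoungDiagram.mem_cells, mem_nkStar] at hc
    exact hc.1.1
  rw [card_eq_sum_rowLen (nkStar n k) n hR]
  have : ∀ a ∈ range n, (nkStar n k).rowLen a = min (n - k) (n - a * (n - k)) :=
    fun a _ => rowLen_nkStar hw a
  rw [Finset.sum_congr rfl this]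
  exact sum_min_eq (n - k) hw n n (Nat.le_mul_of_pos_right n (by omega))

lemma cnt_mu_le_star {n k : ℕ} (μ : YoungDiagram) (hcard : μ.card = n)
    (hrow : μ.rowLen 0 = n - k) (hw : 1 ≤ n - k) (d : ℤ) :
    (μ.cells.filter (fun c => d ≤ (c.2 : ℤ) - c.1)).card
      ≤ ((nkStar n k).cells.filter (fun c => d ≤ (c.2 : ℤ) - c.1)).card := by
  have hRμ : ∀ c ∈ μ.cells, c.1 < n := fun c hc => hcard ▸ cell_fst_lt_card μ hc
  have hRs : ∀ c ∈ (nkStar n k).cells, c.1 < n := by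
    intro c hc
    rw [YoungDiagram.mem_cells, mem_nkStar] at hc
    exact hc.1.1
  rw [cnt_eq_sum μ n hRμ d, cnt_eq_sum (nkStar n k) n hRs d]
  have hstar : ∀ a ∈ range n, (nkStar n k).rowLen a - ((a : ℤ) + d).toNat
      = min (n - k) (n - a * (n - k)) - ((a : ℤ) + d).toNat := by
    intro a _; rw [rowLen_nkStar hw a]
  rw [Finset.sum_congr rfl hstar]
  apply lemA (n - k) d (∑ a ∈ range n, a * μ.rowLen a) n n μ.rowLen le_rfl
  · exact fun a b hab => μ.rowLen_anti a b hab
  · exact fun a => hrow ▸ μ.rowLen_anti 0 a (Nat.zero_le _)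
  · intro a ha
    by_contra h
    have hmem : (a, 0) ∈ μ := YoungDiagram.mem_iff_lt_rowLen.mpr (by omega)
    have := cell_fst_lt_card μ ((μ.mem_cells _).mpr hmem)
    omega
  · have := card_eq_sum_rowLen μ n hRμ
    omega
lemma card_eq_sum_colLen (μ : YoungDiagram) (R : ℕ) (hR : ∀ c ∈ μ.cells, c.2 < R) :
    μ.card = ∑ j ∈ range R, μ.colLen j := by
  change μ.cells.card = _
  rw [Finset.card_eq_sum_card_fiberwise (f := fun c => c.2) (t := range R)
    (fun c hc => mem_range.2 (hR c hc))]
  apply Finset.sum_congr rfl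
  intro j _
  have himg : μ.cells.filter (fun c => c.2 = j)
      = (Finset.range (μ.colLen j)).image (fun i => (i, j)) := by
    ext ⟨i, j'⟩
    simp only [Finset.mem_filter, Finset.mem_image, Finset.mem_range, YoungDiagram.mem_cells]
    constructor
    · rintro ⟨hmem, rfl⟩
      exact ⟨i, YoungDiagram.mem_iff_lt_colLen.mp hmem, rfl⟩
    · rintro ⟨i', hi', heq⟩
      obtain ⟨rfl, rfl⟩ := Prod.mk.injEq _ _ _ _ |>.mp heq
      exact ⟨YoungDiagram.mem_iff_lt_colLen.mpr hi', rfl⟩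
  rw [himg, Finset.card_image_of_injective _ (fun a b h => by simpa using h),
    Finset.card_range]

lemma colFill_strict_col {μ : YoungDiagram} {c c' : ℕ × ℕ} (hc : c ∈ μ.cells)
    (h2 : c.2 < c'.2) : colFill μ c < colFill μ c' := by
  have h1 : c.1 < μ.colLen c.2 := YoungDiagram.mem_iff_lt_colLen.mp ((μ.mem_cells c).mp hc)
  have hstep : (∑ j ∈ range c.2, μ.colLen j) + c.1 + 1 ≤ ∑ j ∈ range (c.2 + 1), μ.colLen j := by
    rw [Finset.sum_range_succ]
    omega
  have hmono : ∑ j ∈ range (c.2 + 1), μ.colLen j ≤ ∑ j ∈ range c'.2, μ.colLen j :=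
    Finset.sum_le_sum_of_subset (Finset.range_subset_range.2 (by omega))
  calc colFill μ c = (∑ j ∈ range c.2, μ.colLen j) + c.1 + 1 := rfl
    _ ≤ ∑ j ∈ range c'.2, μ.colLen j := le_trans hstep hmono
    _ < colFill μ c' := by unfold colFill; omega

lemma colFill_le_card {μ : YoungDiagram} {c : ℕ × ℕ} (hc : c ∈ μ.cells) :
    colFill μ c ≤ μ.card := by
  have h1 : c.1 < μ.colLen c.2 := YoungDiagram.mem_iff_lt_colLen.mp ((μ.mem_cells c).mp hc)
  have hstep : (∑ j ∈ range c.2, μ.colLen j) + c.1 + 1 ≤ ∑ j ∈ range (c.2 + 1), μ.colLen j := by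
    rw [Finset.sum_range_succ]; omega
  have hsnd : c.2 < μ.card := cell_snd_lt_card μ hc
  have hmono : ∑ j ∈ range (c.2 + 1), μ.colLen j ≤ ∑ j ∈ range μ.card, μ.colLen j :=
    Finset.sum_le_sum_of_subset (Finset.range_subset_range.2 (by omega))
  have htot := card_eq_sum_colLen μ μ.card (fun c hc => cell_snd_lt_card μ hc)
  calc colFill μ c = (∑ j ∈ range c.2, μ.colLen j) + c.1 + 1 := rfl
    _ ≤ ∑ j ∈ range μ.card, μ.colLen j := le_trans hstep hmono
    _ = μ.card := htot.symm

lemma colFill_inj {μ : YoungDiagram} {c c' : ℕ × ℕ} (hc : c ∈ μ.cells) (hc' : c' ∈ μ.cells)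
    (heq : colFill μ c = colFill μ c') : c = c' := by
  rcases lt_trichotomy c.2 c'.2 with h | h | h
  · exact absurd heq (Nat.ne_of_lt (colFill_strict_col hc h))
  · have : c.1 = c'.1 := by
      have e1 : colFill μ c = (∑ j ∈ range c.2, μ.colLen j) + c.1 + 1 := rfl
      have e2 : colFill μ c' = (∑ j ∈ range c'.2, μ.colLen j) + c'.1 + 1 := rfl
      rw [h] at e1
      omega
    exact Prod.ext this h
  · exact absurd heq.symm (Nat.ne_of_lt (colFill_strict_col hc' h))

lemma tail_card {ν : YoungDiagram} {T : ℕ × ℕ → ℕ}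
    (hinj : ∀ c ∈ ν.cells, ∀ c' ∈ ν.cells, T c = T c' → c = c')
    (h1 : ∀ c ∈ ν.cells, 1 ≤ T c) (h2 : ∀ c ∈ ν.cells, T c ≤ ν.card)
    (m : ℕ) (hm : 1 ≤ m) :
    (ν.cells.filter (fun c => m ≤ T c)).card = ν.card + 1 - m := by
  classical
  have hA : (ν.cells.filter (fun c => m ≤ T c)).card ≤ (Finset.Icc m ν.card).card := by
    apply Finset.card_le_card_of_injOn T
    · intro c hc
      rw [Finset.mem_coe, Finset.mem_filter] at hc
      exact Finset.mem_Icc.mpr ⟨hc.2, h2 c hc.1⟩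
    · intro a ha b hb hab
      rw [Finset.mem_coe, Finset.mem_filter] at ha hb
      exact hinj a ha.1 b hb.1 hab
  have hB : (ν.cells.filter (fun c => ¬ m ≤ T c)).card ≤ (Finset.Icc 1 (m - 1)).card := by
    apply Finset.card_le_card_of_injOn T
    · intro c hc
      rw [Finset.mem_coe, Finset.mem_filter] at hc
      have := h1 c hc.1
      exact Finset.mem_Icc.mpr ⟨this, by omega⟩
    · intro a ha b hb hab
      rw [Finset.mem_coe, Finset.mem_filter] at ha hb
      exact hinj a ha.1 b hb.1 hab
  have hAB := Finset.card_filter_add_card_filter_not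
    (s := ν.cells) (p := fun c => m ≤ T c)
  have hcards : ν.cells.card = ν.card := rfl
  rw [Nat.card_Icc] at hA hB
  omega
lemma filter_imp_subset {α : Type*} {s : Finset α} {p q : α → Prop}
    [DecidablePred p] [DecidablePred q] (h : ∀ a ∈ s, p a → q a) :
    s.filter p ⊆ s.filter q := by
  intro a ha
  rw [Finset.mem_filter] at ha ⊢
  exact ⟨ha.1, h a ha.1 ha.2⟩

lemma diagFill_lower {ν : YoungDiagram} {c : ℕ × ℕ} (hc : c ∈ ν.cells) :
    (ν.cells.filter (fun e => (e.2 : ℤ) - e.1 < (c.2 : ℤ) - c.1)).card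
      < diagFill ν c := by
  have hpos : 0 < (ν.cells.filter
      (fun e => (e.2 : ℤ) - (e.1 : ℤ) = (c.2 : ℤ) - (c.1 : ℤ) ∧ e.1 ≤ c.1)).card := by
    apply Finset.card_pos.mpr
    exact ⟨c, Finset.mem_filter.mpr ⟨hc, rfl, le_rfl⟩⟩
  unfold diagFill
  omega

lemma diagFill_upper {ν : YoungDiagram} (c : ℕ × ℕ) :
    diagFill ν c ≤ (ν.cells.filter (fun e => (e.2 : ℤ) - e.1 ≤ (c.2 : ℤ) - c.1)).card := by
  unfold diagFill
  have hdisj : Disjoint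
      (ν.cells.filter (fun e => (e.2 : ℤ) - (e.1 : ℤ) < (c.2 : ℤ) - (c.1 : ℤ)))
      (ν.cells.filter (fun e => (e.2 : ℤ) - (e.1 : ℤ) = (c.2 : ℤ) - (c.1 : ℤ) ∧ e.1 ≤ c.1)) := by
    rw [Finset.disjoint_left]
    intro e he1 he2
    rw [Finset.mem_filter] at he1 he2
    omega
  rw [← Finset.card_union_of_disjoint hdisj]
  apply Finset.card_le_card
  apply Finset.union_subset
  · apply filter_imp_subset
    intro e _ he; omega
  · apply filter_imp_subset
    intro e _ he; omega

lemma diagFill_mono {ν : YoungDiagram} {c c' : ℕ × ℕ} (hc' : c' ∈ ν.cells)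
    (h : (c.2 : ℤ) - c.1 < (c'.2 : ℤ) - c'.1) : diagFill ν c < diagFill ν c' := by
  calc diagFill ν c ≤ (ν.cells.filter (fun e => (e.2 : ℤ) - e.1 ≤ (c.2 : ℤ) - c.1)).card :=
        diagFill_upper c
    _ ≤ (ν.cells.filter (fun e => (e.2 : ℤ) - e.1 < (c'.2 : ℤ) - c'.1)).card := by
        apply Finset.card_le_card
        apply filter_imp_subset
        intro e _ he; omega
    _ < diagFill ν c' := diagFill_lower hc'

lemma diagFill_inj {ν : YoungDiagram} {c c' : ℕ × ℕ} (hc : c ∈ ν.cells) (hc' : c' ∈ ν.cells)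
    (heq : diagFill ν c = diagFill ν c') : c = c' := by
  rcases lt_trichotomy ((c.2 : ℤ) - c.1) ((c'.2 : ℤ) - c'.1) with h | h | h
  · exact absurd heq (Nat.ne_of_lt (diagFill_mono hc' h))
  · -- same diagonal
    have hfirst : (ν.cells.filter (fun e => (e.2 : ℤ) - (e.1 : ℤ) < (c.2 : ℤ) - (c.1 : ℤ))).card
        = (ν.cells.filter (fun e => (e.2 : ℤ) - (e.1 : ℤ) < (c'.2 : ℤ) - (c'.1 : ℤ))).card := by
      rw [h]
    have hkey : ∀ (a b : ℕ × ℕ), a ∈ ν.cells → b ∈ ν.cells →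
        (a.2 : ℤ) - a.1 = (b.2 : ℤ) - b.1 → a.1 < b.1 →
        diagFill ν a < diagFill ν b := by
      intro a b ha hb hab h1
      have hss : (ν.cells.filter (fun e => (e.2 : ℤ) - (e.1 : ℤ) = (a.2 : ℤ) - (a.1 : ℤ) ∧ e.1 ≤ a.1))
          ⊂ (ν.cells.filter (fun e => (e.2 : ℤ) - (e.1 : ℤ) = (b.2 : ℤ) - (b.1 : ℤ) ∧ e.1 ≤ b.1)) := by
        rw [Finset.ssubset_iff_of_subset]
        · exact ⟨b, Finset.mem_filter.mpr ⟨hb, rfl, le_rfl⟩,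
            fun hmem => by rw [Finset.mem_filter] at hmem; omega⟩
        · apply filter_imp_subset
          intro e _ he; omega
      have hlt := Finset.card_lt_card hss
      have hfirst' : (ν.cells.filter (fun e => (e.2 : ℤ) - (e.1 : ℤ) < (a.2 : ℤ) - (a.1 : ℤ))).card
          = (ν.cells.filter (fun e => (e.2 : ℤ) - (e.1 : ℤ) < (b.2 : ℤ) - (b.1 : ℤ))).card := by
        rw [hab]
      unfold diagFill
      omega
    rcases lt_trichotomy c.1 c'.1 with h1 | h1 | h1
    · exact absurd heq (Nat.ne_of_lt (hkey c c' hc hc' h h1))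
    · have h2 : c.2 = c'.2 := by omega
      exact Prod.ext h1 h2
    · exact absurd heq.symm (Nat.ne_of_lt (hkey c' c hc' hc h.symm h1))
  · exact absurd heq.symm (Nat.ne_of_lt (diagFill_mono hc h))

lemma diagFill_ge_one {ν : YoungDiagram} {c : ℕ × ℕ} (hc : c ∈ ν.cells) :
    1 ≤ diagFill ν c := by
  have := diagFill_lower hc
  omega

lemma diagFill_le_card {ν : YoungDiagram} (c : ℕ × ℕ) : diagFill ν c ≤ ν.card := by
  have h := diagFill_upper (ν := ν) c
  have h2 : (ν.cells.filter (fun e => (e.2 : ℤ) - e.1 ≤ (c.2 : ℤ) - c.1)).card ≤ ν.cells.card :=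
    Finset.card_le_card (Finset.filter_subset _ _)
  have hcards : ν.cells.card = ν.card := rfl
  omega

lemma diagFill_cont_iff {ν : YoungDiagram} {c : ℕ × ℕ} (hc : c ∈ ν.cells) (d : ℤ) :
    d ≤ (c.2 : ℤ) - c.1 ↔
      (ν.cells.filter (fun e => (e.2 : ℤ) - e.1 < d)).card + 1 ≤ diagFill ν c := by
  constructor
  · intro hd
    have hsub : (ν.cells.filter (fun e => (e.2 : ℤ) - e.1 < d)).card
        ≤ (ν.cells.filter (fun e => (e.2 : ℤ) - e.1 < (c.2 : ℤ) - c.1)).card := by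
      apply Finset.card_le_card
      apply filter_imp_subset
      intro e _ he; omega
    have := diagFill_lower hc
    omega
  · intro hF
    by_contra hd
    push_neg at hd
    have hsub : (ν.cells.filter (fun e => (e.2 : ℤ) - e.1 ≤ (c.2 : ℤ) - c.1)).card
        ≤ (ν.cells.filter (fun e => (e.2 : ℤ) - e.1 < d)).card := by
      apply Finset.card_le_card
      apply filter_imp_subset
      intro e _ he; omega
    have := diagFill_upper (ν := ν) c
    omega
lemma F_add_cnt (ν : YoungDiagram) (d : ℤ) :
    (ν.cells.filter (fun e => (e.2 : ℤ) - e.1 < d)).card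
      + (ν.cells.filter (fun c => d ≤ (c.2 : ℤ) - c.1)).card = ν.card := by
  classical
  have h := Finset.card_filter_add_card_filter_not
    (s := ν.cells) (p := fun c => d ≤ (c.2 : ℤ) - c.1)
  have he : ν.cells.filter (fun c => ¬ d ≤ (c.2 : ℤ) - c.1)
      = ν.cells.filter (fun e => (e.2 : ℤ) - e.1 < d) := by
    apply Finset.filter_congr
    intro c _
    exact not_le
  rw [he] at h
  have hcards : ν.cells.card = ν.card := rfl
  omega

lemma Kdiag (ν : YoungDiagram) (m : ℕ) (hm : 1 ≤ m) (d : ℤ) :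
    (ν.cells.filter (fun c => m ≤ diagFill ν c ∧ d ≤ (c.2 : ℤ) - c.1)).card
      = ν.card + 1 - max m ((ν.cells.filter (fun e => (e.2 : ℤ) - e.1 < d)).card + 1) := by
  have hcongr : ν.cells.filter (fun c => m ≤ diagFill ν c ∧ d ≤ (c.2 : ℤ) - c.1)
      = ν.cells.filter (fun c =>
          max m ((ν.cells.filter (fun e => (e.2 : ℤ) - e.1 < d)).card + 1) ≤ diagFill ν c) := by
    apply Finset.filter_congr
    intro c hc
    rw [max_le_iff]
    constructor
    · rintro ⟨h1, h2⟩
      exact ⟨h1, (diagFill_cont_iff hc d).mp h2⟩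
    · rintro ⟨h1, h2⟩
      exact ⟨h1, (diagFill_cont_iff hc d).mpr h2⟩
  rw [hcongr]
  exact tail_card (fun c hc c' hc' h => diagFill_inj hc hc' h)
    (fun c hc => diagFill_ge_one hc) (fun c _ => diagFill_le_card c) _ (by omega)

lemma K_le {n k : ℕ} (μ : YoungDiagram) (hcard : μ.card = n) (hrow : μ.rowLen 0 = n - k)
    (hw : 1 ≤ n - k) (m : ℕ) (hm : 1 ≤ m) (d : ℤ) :
    (μ.cells.filter (fun c => m ≤ colFill μ c ∧ d ≤ (c.2 : ℤ) - c.1)).card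
      ≤ ((nkStar n k).cells.filter
          (fun c => m ≤ diagFill (nkStar n k) c ∧ d ≤ (c.2 : ℤ) - c.1)).card := by
  have h1 : (μ.cells.filter (fun c => m ≤ colFill μ c ∧ d ≤ (c.2 : ℤ) - c.1)).card
      ≤ (μ.cells.filter (fun c => m ≤ colFill μ c)).card :=
    Finset.card_le_card (filter_imp_subset (fun c _ h => h.1))
  have h1' : (μ.cells.filter (fun c => m ≤ colFill μ c)).card = n + 1 - m := by
    rw [← hcard]
    exact tail_card (fun c hc c' hc' h => colFill_inj hc hc' h)
      (fun c _ => by unfold colFill; omega) (fun c hc => colFill_le_card hc) m hm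
  have h2 : (μ.cells.filter (fun c => m ≤ colFill μ c ∧ d ≤ (c.2 : ℤ) - c.1)).card
      ≤ (μ.cells.filter (fun c => d ≤ (c.2 : ℤ) - c.1)).card :=
    Finset.card_le_card (filter_imp_subset (fun c _ h => h.2))
  have h3 := cnt_mu_le_star μ hcard hrow hw d
  have h4 := Kdiag (nkStar n k) m hm d
  have h5 := F_add_cnt (nkStar n k) d
  rw [card_nkStar hw] at h4 h5
  omega

lemma sumZ (n : ℕ) (A : Finset (ℕ × ℕ)) (hA : ∀ c ∈ A, c.1 < n ∧ c.2 < n) :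
    ∑ c ∈ A, ((c.2 : ℤ) - c.1 + 1)
      = (∑ d ∈ Finset.Icc (0 : ℤ) ((n : ℤ) - 1),
            ((A.filter (fun c => d ≤ (c.2 : ℤ) - c.1)).card : ℤ))
        - ∑ d ∈ Finset.Icc (1 - (n : ℤ)) (-1),
            ((A.card : ℤ) - ((A.filter (fun c => d ≤ (c.2 : ℤ) - c.1)).card : ℤ)) := by
  classical
  have key : ∀ c ∈ A, ((c.2 : ℤ) - c.1 + 1)
      = (∑ d ∈ Finset.Icc (0 : ℤ) ((n : ℤ) - 1), if d ≤ (c.2 : ℤ) - c.1 then (1 : ℤ) else 0)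
        - ∑ d ∈ Finset.Icc (1 - (n : ℤ)) (-1),
            (1 - if d ≤ (c.2 : ℤ) - c.1 then (1 : ℤ) else 0) := by
    intro c hc
    obtain ⟨hc1, hc2⟩ := hA c hc
    have e1 : ∑ d ∈ Finset.Icc (0 : ℤ) ((n : ℤ) - 1),
        (if d ≤ (c.2 : ℤ) - c.1 then (1 : ℤ) else 0)
        = ((Finset.Icc (0 : ℤ) (min ((n : ℤ) - 1) ((c.2 : ℤ) - c.1))).card : ℤ) := by
      rw [Finset.sum_boole]
      norm_cast
      apply congrArg
      ext d
      simp only [Finset.mem_filter, Finset.mem_Icc]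
      omega
    have e2 : ∑ d ∈ Finset.Icc (1 - (n : ℤ)) (-1),
        (1 - if d ≤ (c.2 : ℤ) - c.1 then (1 : ℤ) else 0)
        = ((Finset.Icc (1 - (n : ℤ)) (-1)).card : ℤ)
          - ((Finset.Icc (1 - (n : ℤ)) (min (-1) ((c.2 : ℤ) - c.1))).card : ℤ) := by
      rw [Finset.sum_sub_distrib, Finset.sum_const, Finset.sum_boole, nsmul_eq_mul, mul_one]
      congr 1
      norm_cast
      apply congrArg
      ext d
      simp only [Finset.mem_filter, Finset.mem_Icc]
      omega
    rw [e1, e2, Int.card_Icc, Int.card_Icc, Int.card_Icc]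
    omega
  rw [Finset.sum_congr rfl key, Finset.sum_sub_distrib]
  congr 1
  · rw [Finset.sum_comm]
    apply Finset.sum_congr rfl
    intro d _
    rw [Finset.sum_boole]
  · rw [Finset.sum_comm]
    apply Finset.sum_congr rfl
    intro d _
    rw [Finset.sum_sub_distrib, Finset.sum_const, Finset.sum_boole, nsmul_eq_mul, mul_one]
lemma Wle_real {n k : ℕ} (μ : YoungDiagram) (hcard : μ.card = n) (hrow : μ.rowLen 0 = n - k)
    (hw : 1 ≤ n - k) (m : ℕ) (hm : 1 ≤ m) :
    ∑ c ∈ μ.cells.filter (fun c => m ≤ colFill μ c), ((c.2 : ℝ) - c.1 + 1)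
      ≤ ∑ c ∈ (nkStar n k).cells.filter (fun c => m ≤ diagFill (nkStar n k) c),
          ((c.2 : ℝ) - c.1 + 1) := by
  classical
  set A := μ.cells.filter (fun c => m ≤ colFill μ c) with hA
  set B := (nkStar n k).cells.filter (fun c => m ≤ diagFill (nkStar n k) c) with hB
  have hAbd : ∀ c ∈ A, c.1 < n ∧ c.2 < n := by
    intro c hc
    have hc' : c ∈ μ.cells := Finset.filter_subset _ _ hc
    exact ⟨hcard ▸ cell_fst_lt_card μ hc', hcard ▸ cell_snd_lt_card μ hc'⟩
  have hBbd : ∀ c ∈ B, c.1 < n ∧ c.2 < n := by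
    intro c hc
    have hc' : c ∈ (nkStar n k).cells := Finset.filter_subset _ _ hc
    rw [YoungDiagram.mem_cells, mem_nkStar] at hc'
    exact hc'.1
  have hcardA : A.card = n + 1 - m := by
    rw [hA, ← hcard]
    exact tail_card (fun c hc c' hc' h => colFill_inj hc hc' h)
      (fun c _ => by unfold colFill; omega) (fun c hc => colFill_le_card hc) m hm
  have hcardB : B.card = n + 1 - m := by
    have h := tail_card (ν := nkStar n k) (T := diagFill (nkStar n k))
      (fun c hc c' hc' h => diagFill_inj hc hc' h)
      (fun c hc => diagFill_ge_one hc) (fun c _ => diagFill_le_card c) m hm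
    rw [card_nkStar hw] at h
    rw [hB]
    exact h
  have hK : ∀ d : ℤ, (A.filter (fun c => d ≤ (c.2 : ℤ) - c.1)).card
      ≤ (B.filter (fun c => d ≤ (c.2 : ℤ) - c.1)).card := by
    intro d
    rw [hA, hB, Finset.filter_filter, Finset.filter_filter]
    exact K_le μ hcard hrow hw m hm d
  have hZ : ∑ c ∈ A, ((c.2 : ℤ) - c.1 + 1) ≤ ∑ c ∈ B, ((c.2 : ℤ) - c.1 + 1) := by
    rw [sumZ n A hAbd, sumZ n B hBbd]
    apply sub_le_sub
    · apply Finset.sum_le_sum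
      intro d _
      exact_mod_cast hK d
    · apply Finset.sum_le_sum
      intro d _
      have := hK d
      have h1 : (A.filter (fun c => d ≤ (c.2 : ℤ) - c.1)).card ≤ A.card :=
        Finset.card_le_card (Finset.filter_subset _ _)
      rw [hcardA, hcardB]
      omega
  have hcast : ∀ (S : Finset (ℕ × ℕ)),
      ((∑ c ∈ S, ((c.2 : ℤ) - c.1 + 1) : ℤ) : ℝ) = ∑ c ∈ S, ((c.2 : ℝ) - c.1 + 1) := by
    intro S
    push_cast
    rfl
  rw [← hcast A, ← hcast B]
  exact_mod_cast hZ

lemma expand (α : ℝ) {ν : YoungDiagram} {T : ℕ × ℕ → ℕ} {n : ℕ}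
    (h1 : ∀ c ∈ ν.cells, 1 ≤ T c) (h2 : ∀ c ∈ ν.cells, T c ≤ n) :
    ∑ c ∈ ν.cells, (((c.2 : ℝ) - c.1 + 1) * (T c : ℝ) ^ (α - 1))
      = (∑ c ∈ ν.cells, ((c.2 : ℝ) - c.1 + 1))
        + ∑ i ∈ range n, ((((i + 2 : ℕ) : ℝ) ^ (α - 1) - ((i + 1 : ℕ) : ℝ) ^ (α - 1))
            * ∑ c ∈ ν.cells.filter (fun c => i + 2 ≤ T c), ((c.2 : ℝ) - c.1 + 1)) := by
  classical
  set F : ℕ → ℝ := fun j => ((j : ℝ) + 1) ^ (α - 1) with hF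
  have key : ∀ c ∈ ν.cells, (T c : ℝ) ^ (α - 1)
      = 1 + ∑ i ∈ range n, (if i + 2 ≤ T c then F (i + 1) - F i else 0) := by
    intro c hc
    have hTc1 := h1 c hc
    have hTcn := h2 c hc
    have htel : ∑ i ∈ range (T c - 1), (F (i + 1) - F i) = F (T c - 1) - F 0 :=
      Finset.sum_range_sub F (T c - 1)
    have hF0 : F 0 = 1 := by
      rw [hF]
      norm_num
    have hFT : F (T c - 1) = (T c : ℝ) ^ (α - 1) := by
      have hc1 : ((T c - 1 : ℕ) : ℝ) + 1 = (T c : ℝ) := by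
        rw [Nat.cast_sub hTc1]
        ring
      simp only [hF]
      rw [hc1]
    have hext : ∑ i ∈ range (T c - 1), (F (i + 1) - F i)
        = ∑ i ∈ range n, (if i + 2 ≤ T c then F (i + 1) - F i else 0) := by
      rw [← Finset.sum_filter]
      apply Finset.sum_congr _ (fun _ _ => rfl)
      ext i
      simp only [Finset.mem_filter, Finset.mem_range]
      omega
    rw [← hext, htel, hF0, hFT]
    ring
  calc ∑ c ∈ ν.cells, (((c.2 : ℝ) - c.1 + 1) * (T c : ℝ) ^ (α - 1))
      = ∑ c ∈ ν.cells, (((c.2 : ℝ) - c.1 + 1)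
          + ∑ i ∈ range n, (if i + 2 ≤ T c then ((c.2 : ℝ) - c.1 + 1) * (F (i + 1) - F i) else 0)) := by
        apply Finset.sum_congr rfl
        intro c hc
        rw [key c hc, mul_add, mul_one, Finset.mul_sum]
        congr 1
        apply Finset.sum_congr rfl
        intro i _
        rw [mul_ite, mul_zero]
    _ = (∑ c ∈ ν.cells, ((c.2 : ℝ) - c.1 + 1))
        + ∑ c ∈ ν.cells, ∑ i ∈ range n,
            (if i + 2 ≤ T c then ((c.2 : ℝ) - c.1 + 1) * (F (i + 1) - F i) else 0) :=
        Finset.sum_add_distrib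
    _ = (∑ c ∈ ν.cells, ((c.2 : ℝ) - c.1 + 1))
        + ∑ i ∈ range n, ((F (i + 1) - F i)
            * ∑ c ∈ ν.cells.filter (fun c => i + 2 ≤ T c), ((c.2 : ℝ) - c.1 + 1)) := by
        congr 1
        rw [Finset.sum_comm]
        apply Finset.sum_congr rfl
        intro i _
        rw [Finset.sum_ite, Finset.sum_const_zero, add_zero, ← Finset.sum_mul, mul_comm]
    _ = _ := by
        congr 1
        apply Finset.sum_congr rfl
        intro i _
        congr 1
        have e1 : ((i + 1 : ℕ) : ℝ) + 1 = ((i + 2 : ℕ) : ℝ) := by push_cast; ring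
        have e2 : ((i : ℕ) : ℝ) + 1 = ((i + 1 : ℕ) : ℝ) := by push_cast; ring
        simp only [hF]
        rw [e1, e2]

end EigAux
set_option maxHeartbeats 1000000 in
open Finset in
/-- for `α ≥ 1` and `λ ⊢ n` with first row `λ₁ = n−k` (`1 ≤ k ≤ n−1`),
`eig_α(T_λ^↓) ≤ eig_α(T^↘_{(n−k,⋆)})`. -/
theorem eigA_colFill_le_diag (α : ℝ) (hα : 1 ≤ α) (n k : ℕ) (μ : YoungDiagram)
    (hcard : μ.card = n) (hrow : μ.rowLen 0 = n - k) (hk1 : 1 ≤ k) (hk2 : k ≤ n - 1) :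
    eigA α μ (colFill μ) ≤ eigA α (nkStar n k) (diagFill (nkStar n k)) := by
  have hn2 : 2 ≤ n := by omega
  have hw : 1 ≤ n - k := by omega
  have hstar := card_nkStar (n := n) (k := k) hw
  unfold eigA
  rw [hcard, hstar]
  have hNA : 0 < NA α n := by
    unfold NA
    apply Finset.sum_pos
    · intro i _
      exact Real.rpow_pos_of_pos (by positivity) α
    · exact ⟨0, Finset.mem_range.mpr (by omega)⟩
  apply mul_le_mul_of_nonneg_left _ (one_div_nonneg.mpr hNA.le)
  have hc1 : ∀ c ∈ μ.cells, 1 ≤ colFill μ c := fun c _ => by unfold colFill; omega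
  have hc2 : ∀ c ∈ μ.cells, colFill μ c ≤ n := by
    intro c hc
    have h := colFill_le_card hc
    rwa [hcard] at h
  have hd1 : ∀ c ∈ (nkStar n k).cells, 1 ≤ diagFill (nkStar n k) c :=
    fun c hc => diagFill_ge_one hc
  have hd2 : ∀ c ∈ (nkStar n k).cells, diagFill (nkStar n k) c ≤ n := by
    intro c _
    have h := diagFill_le_card (ν := nkStar n k) c
    rwa [hstar] at h
  rw [expand α hc1 hc2, expand α hd1 hd2]
  apply add_le_add
  · have h := Wle_real μ hcard hrow hw 1 le_rfl
    rw [Finset.filter_true_of_mem (fun c hc => hc1 c hc),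
      Finset.filter_true_of_mem (fun c hc => hd1 c hc)] at h
    exact h
  · apply Finset.sum_le_sum
    intro i _
    have hΔ : 0 ≤ (((i + 2 : ℕ) : ℝ) ^ (α - 1) - ((i + 1 : ℕ) : ℝ) ^ (α - 1)) := by
      have hle := Real.rpow_le_rpow (x := ((i + 1 : ℕ) : ℝ)) (y := ((i + 2 : ℕ) : ℝ))
        (by positivity) (by push_cast; linarith) (by linarith : (0 : ℝ) ≤ α - 1)
      linarith
    exact mul_le_mul_of_nonneg_left (Wle_real μ hcard hrow hw (i + 2) (by omega)) hΔ
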